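/- If k, l ∈ ℕ have different parities, then no probability measure is simultaneously a mixture of noncentral chi-squared distributions with k degrees of freedom and a mixture of noncentral chi-squared distributions with l degrees of freedom: Mix{χ²_k(θ) : θ ≥ 0} ∩ Mix{χ²_l(θ) : θ ≥ 0} = ∅. -/

import Mathlib

open MeasureTheory Set

/-- Density of the central chi-squared distribution with m degrees of freedom. -/
noncomputable def chiDensity (m : ℕ) (x : ℝ) : ℝ :=
  x ^ ((m : ℝ) / 2 - 1) * Real.exp (-x / 2) / (2 ^ ((m : ℝ) / 2) * Real.Gamma ((m : ℝ) / 2))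

/-- The noncentral chi-squared distribution with k degrees of freedom and
noncentrality parameter θ. -/
noncomputable def ncChiSq (k : ℕ) (θ : ℝ) : Measure ℝ :=
  (volume.restrict (Set.Ioi (0:ℝ))).withDensity
    (fun x => ENNReal.ofReal
      (∑' n : ℕ, Real.exp (-θ / 2) * (θ / 2) ^ n / (Nat.factorial n) * chiDensity (k + 2 * n) x))

/-- μ belongs to Mix{χ²_k(θ) : θ ≥ 0}. -/
def InMixNcChiSq (k : ℕ) (μ : Measure ℝ) : Prop :=
  ∃ ν : Measure ℝ, IsProbabilityMeasure ν ∧ ν {θ : ℝ | θ < 0} = 0 ∧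
    ∀ A : Set ℝ, MeasurableSet A → μ A = ∫⁻ θ, ncChiSq k θ A ∂ν

/-!
Near the origin the density of `χ²_k(θ)` is squeezed between `e^{-θ/2} a x^{k/2-1}` and
`C x^{k/2-1}`, with `a, C > 0` depending only on `k`: the upper bound holds because the Poisson
weights sum to one and every `χ²_{k+2n}` density is at most `C x^{k/2-1}` on `(0, 1]`, the lower
bound comes from the term `n = 0`. Integrating against the mixing measure, which gives `e^{-θ/2}`
positive mass, every `k`-mixture satisfies `c ε^{k/2} ≤ μ (0, ε] ≤ C ε^{k/2}` for small `ε`, with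
`c > 0`. A measure in both families therefore has `k = l`, which is impossible when `k + l` is odd.
-/

open Filter Topology

theorem Real.Gamma_le_Gamma_add_nat {a : ℝ} (ha : 1 ≤ a) (n : ℕ) :
    Real.Gamma a ≤ Real.Gamma (a + n) := by
  induction n with
  | zero => simp
  | succ n ih =>
    have hpos : 0 < a + n := by positivity
    calc Real.Gamma a ≤ Real.Gamma (a + n) := ih
      _ ≤ (a + n) * Real.Gamma (a + n) :=
          le_mul_of_one_le_left (Real.Gamma_pos_of_pos hpos).le
            (by linarith [n.cast_nonneg (α := ℝ)])
      _ = Real.Gamma (a + ↑(n + 1)) := by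
          rw [Nat.cast_succ, ← add_assoc, Real.Gamma_add_one hpos.ne']

theorem Real.inv_Gamma_add_nat_le {a : ℝ} (ha : 0 ≤ a) (n : ℕ) :
    (Real.Gamma (a + n))⁻¹ ≤ max (Real.Gamma a)⁻¹ (Real.Gamma (a + 1))⁻¹ := by
  rcases n with _ | n
  · simp
  · refine le_max_of_le_right (inv_anti₀ (Real.Gamma_pos_of_pos (by positivity)) ?_)
    simpa [add_assoc, add_comm (1 : ℝ)] using
      Real.Gamma_le_Gamma_add_nat (a := a + 1) (by linarith) n

theorem hasSum_exp_neg_mul_pow_div_factorial {r : ℝ} (hr : 0 ≤ r) :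
    HasSum (fun n : ℕ => Real.exp (-r) * r ^ n / n.factorial) 1 := by
  simpa [Real.coe_toNNReal r hr] using ProbabilityTheory.hasSum_one_poissonMeasure r.toNNReal

theorem summable_mul_of_nonneg_of_le {ι : Type*} {w f : ι → ℝ} {C : ℝ} (hw : Summable w)
    (hw0 : ∀ i, 0 ≤ w i) (hf0 : ∀ i, 0 ≤ f i) (hfC : ∀ i, f i ≤ C) :
    Summable fun i => w i * f i :=
  (hw.mul_right C).of_nonneg_of_le (fun i => mul_nonneg (hw0 i) (hf0 i))
    fun i => mul_le_mul_of_nonneg_left (hfC i) (hw0 i)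

theorem tsum_mul_le_of_hasSum_one {ι : Type*} {w f : ι → ℝ} {C : ℝ} (hw : HasSum w 1)
    (hw0 : ∀ i, 0 ≤ w i) (hf0 : ∀ i, 0 ≤ f i) (hfC : ∀ i, f i ≤ C) :
    ∑' i, w i * f i ≤ C := by
  calc ∑' i, w i * f i ≤ ∑' i, w i * C :=
        (summable_mul_of_nonneg_of_le hw.summable hw0 hf0 hfC).tsum_le_tsum
          (fun i => mul_le_mul_of_nonneg_left (hfC i) (hw0 i)) (hw.summable.mul_right C)
    _ = C := by rw [tsum_mul_right, hw.tsum_eq, one_mul]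

theorem le_of_eventually_mul_rpow_le_mul_rpow {a b c C : ℝ} (hc : 0 < c)
    (h : ∀ᶠ ε in 𝓝[>] 0, c * ε ^ a ≤ C * ε ^ b) : b ≤ a := by
  by_contra! hab
  have hba : 0 < b - a := sub_pos.2 hab
  have hlim : Tendsto (fun ε : ℝ => C * ε ^ (b - a)) (𝓝[>] 0) (𝓝 0) := by
    have hpow : Tendsto (fun ε : ℝ => ε ^ (b - a)) (𝓝[>] 0) (𝓝 0) := by
      simpa [Real.zero_rpow hba.ne'] using
        (Real.continuousAt_rpow_const 0 (b - a) (Or.inr hba.le)).tendsto.mono_left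
          nhdsWithin_le_nhds
    simpa using hpow.const_mul C
  have hle : ∀ᶠ ε in 𝓝[>] 0, c ≤ C * ε ^ (b - a) := by
    filter_upwards [h, self_mem_nhdsWithin] with ε hε (hε0 : 0 < ε)
    have hεa : 0 < ε ^ a := Real.rpow_pos_of_pos hε0 a
    rw [← mul_le_mul_iff_of_pos_right hεa, mul_assoc, ← Real.rpow_add hε0, sub_add_cancel]
    exact hε
  exact hc.not_ge (ge_of_tendsto hlim hle)

noncomputable def ncChiDensity (k : ℕ) (θ x : ℝ) : ℝ :=
  ∑' n : ℕ, Real.exp (-θ / 2) * (θ / 2) ^ n / (Nat.factorial n) * chiDensity (k + 2 * n) x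

theorem ncChiSq_Ioc (k : ℕ) (θ ε : ℝ) :
    ncChiSq k θ (Ioc 0 ε) = ∫⁻ x in Ioc 0 ε, ENNReal.ofReal (ncChiDensity k θ x) := by
  rw [ncChiSq, withDensity_apply _ measurableSet_Ioc, Measure.restrict_restrict measurableSet_Ioc,
    inter_eq_left.mpr Ioc_subset_Ioi_self]
  rfl

theorem chiDensity_nonneg (m : ℕ) {x : ℝ} (hx : 0 ≤ x) : 0 ≤ chiDensity m x := by
  have := Real.Gamma_nonneg_of_nonneg (s := (m : ℝ) / 2) (by positivity)
  unfold chiDensity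
  positivity

theorem chiDensity_add_two_mul (k n : ℕ) {x : ℝ} (hx : 0 < x) :
    chiDensity (k + 2 * n) x = x ^ ((k : ℝ) / 2 - 1) * (x / 2) ^ n * Real.exp (-x / 2) /
      (2 ^ ((k : ℝ) / 2) * Real.Gamma ((k : ℝ) / 2 + n)) := by
  have hm : ((k + 2 * n : ℕ) : ℝ) / 2 = (k : ℝ) / 2 + n := by push_cast; ring
  rw [chiDensity, hm, add_sub_right_comm, Real.rpow_add hx, Real.rpow_add two_pos,
    Real.rpow_natCast, Real.rpow_natCast, div_pow]
  ring

theorem exists_chiDensity_add_two_mul_le (k : ℕ) :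
    ∃ C, 0 ≤ C ∧ ∀ n : ℕ, ∀ x ∈ Ioc (0 : ℝ) 1,
      chiDensity (k + 2 * n) x ≤ C * x ^ ((k : ℝ) / 2 - 1) := by
  set p : ℝ := (k : ℝ) / 2
  have hp : 0 ≤ p := by positivity
  refine ⟨max (Real.Gamma p)⁻¹ (Real.Gamma (p + 1))⁻¹ / 2 ^ p,
    div_nonneg (le_max_of_le_right (inv_nonneg.2 (Real.Gamma_nonneg_of_nonneg (by positivity))))
      (by positivity), fun n x ⟨hx0, hx1⟩ => ?_⟩
  have hΓ : 0 ≤ (Real.Gamma (p + n))⁻¹ := inv_nonneg.2 (Real.Gamma_nonneg_of_nonneg (by positivity))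
  calc chiDensity (k + 2 * n) x
      = x ^ (p - 1) * (x / 2) ^ n * Real.exp (-x / 2) / 2 ^ p * (Real.Gamma (p + n))⁻¹ := by
        rw [chiDensity_add_two_mul k n hx0]; ring
    _ ≤ x ^ (p - 1) * 1 * 1 / 2 ^ p * max (Real.Gamma p)⁻¹ (Real.Gamma (p + 1))⁻¹ := by
        gcongr
        · exact pow_le_one₀ (by positivity) (by linarith)
        · exact Real.exp_le_one_iff.2 (by linarith)
        · exact Real.inv_Gamma_add_nat_le hp n
    _ = max (Real.Gamma p)⁻¹ (Real.Gamma (p + 1))⁻¹ / 2 ^ p * x ^ (p - 1) := by ring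

theorem exp_neg_half_mul_rpow_le_chiDensity (k : ℕ) {x : ℝ} (hx0 : 0 ≤ x) (hx1 : x ≤ 1) :
    Real.exp (-1 / 2) / (2 ^ ((k : ℝ) / 2) * Real.Gamma ((k : ℝ) / 2)) * x ^ ((k : ℝ) / 2 - 1)
      ≤ chiDensity k x := by
  have := Real.Gamma_nonneg_of_nonneg (s := (k : ℝ) / 2) (by positivity)
  rw [chiDensity, div_mul_eq_mul_div, mul_comm (Real.exp _)]
  gcongr

theorem exists_ncChiDensity_le (k : ℕ) :
    ∃ C, 0 ≤ C ∧ ∀ θ, 0 ≤ θ → ∀ x ∈ Ioc (0 : ℝ) 1,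
      ncChiDensity k θ x ≤ C * x ^ ((k : ℝ) / 2 - 1) := by
  obtain ⟨C, hC, hbound⟩ := exists_chiDensity_add_two_mul_le k
  refine ⟨C, hC, fun θ hθ x hx => ?_⟩
  exact tsum_mul_le_of_hasSum_one
    (by simpa only [neg_div] using hasSum_exp_neg_mul_pow_div_factorial (by positivity : 0 ≤ θ / 2))
    (fun n => by positivity) (fun n => chiDensity_nonneg _ hx.1.le) (fun n => hbound n x hx)

theorem exp_neg_mul_chiDensity_le_ncChiDensity (k : ℕ) {θ x : ℝ} (hθ : 0 ≤ θ)
    (hx : x ∈ Ioc (0 : ℝ) 1) : Real.exp (-θ / 2) * chiDensity k x ≤ ncChiDensity k θ x := by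
  obtain ⟨C, -, hbound⟩ := exists_chiDensity_add_two_mul_le k
  have hsum : Summable fun n : ℕ =>
      Real.exp (-θ / 2) * (θ / 2) ^ n / (Nat.factorial n) * chiDensity (k + 2 * n) x :=
    summable_mul_of_nonneg_of_le
      (by simpa only [neg_div] using
        (hasSum_exp_neg_mul_pow_div_factorial (by positivity : 0 ≤ θ / 2)).summable)
      (fun n => by positivity) (fun n => chiDensity_nonneg _ hx.1.le) (fun n => hbound n x hx)
  simpa [ncChiDensity] using
    hsum.le_tsum 0 fun n _ => mul_nonneg (by positivity) (chiDensity_nonneg _ hx.1.le)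

theorem lintegral_Ioc_ofReal_mul_rpow_sub_one {C p ε : ℝ} (hC : 0 ≤ C) (hp : 0 < p)
    (hε : 0 ≤ ε) :
    ∫⁻ x in Ioc 0 ε, ENNReal.ofReal (C * x ^ (p - 1)) = ENNReal.ofReal (C / p * ε ^ p) := by
  have hint : IntegrableOn (fun x : ℝ => C * x ^ (p - 1)) (Ioc 0 ε) := by
    refine Integrable.const_mul ?_ C
    exact (intervalIntegrable_iff_integrableOn_Ioc_of_le hε).1
      (intervalIntegral.intervalIntegrable_rpow' (by linarith))
  have hnonneg : 0 ≤ᵐ[volume.restrict (Ioc 0 ε)] fun x : ℝ => C * x ^ (p - 1) := by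
    filter_upwards [ae_restrict_mem measurableSet_Ioc] with x hx
    exact mul_nonneg hC (Real.rpow_nonneg hx.1.le _)
  rw [← ofReal_integral_eq_lintegral_ofReal hint hnonneg, ← intervalIntegral.integral_of_le hε,
    intervalIntegral.integral_const_mul, integral_rpow (Or.inl (by linarith)), sub_add_cancel,
    Real.zero_rpow hp.ne']
  ring_nf

theorem exists_ncChiSq_Ioc_le {k : ℕ} (hk : 1 ≤ k) :
    ∃ C, ∀ θ, 0 ≤ θ → ∀ ε ∈ Ioc (0 : ℝ) 1,
      ncChiSq k θ (Ioc 0 ε) ≤ ENNReal.ofReal (C * ε ^ ((k : ℝ) / 2)) := by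
  obtain ⟨C, hC, hbound⟩ := exists_ncChiDensity_le k
  refine ⟨C / ((k : ℝ) / 2), fun θ hθ ε ⟨hε0, hε1⟩ => ?_⟩
  rw [ncChiSq_Ioc, ← lintegral_Ioc_ofReal_mul_rpow_sub_one hC (by positivity) hε0.le]
  exact setLIntegral_mono (by fun_prop) fun x hx =>
    ENNReal.ofReal_le_ofReal (hbound θ hθ x ⟨hx.1, hx.2.trans hε1⟩)

theorem exists_exp_neg_mul_le_ncChiSq_Ioc {k : ℕ} (hk : 1 ≤ k) :
    ∃ c > 0, ∀ θ, 0 ≤ θ → ∀ ε ∈ Ioc (0 : ℝ) 1,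
      ENNReal.ofReal (Real.exp (-θ / 2)) * ENNReal.ofReal (c * ε ^ ((k : ℝ) / 2))
        ≤ ncChiSq k θ (Ioc 0 ε) := by
  set p : ℝ := (k : ℝ) / 2
  have hp : 0 < p := by positivity
  set a := Real.exp (-1 / 2) / (2 ^ p * Real.Gamma p)
  have ha : 0 < a := by have := Real.Gamma_pos_of_pos hp; positivity
  refine ⟨a / p, by positivity, fun θ hθ ε ⟨hε0, hε1⟩ => ?_⟩
  rw [ncChiSq_Ioc, ← lintegral_Ioc_ofReal_mul_rpow_sub_one ha.le hp hε0.le,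
    ← lintegral_const_mul _ (by fun_prop)]
  refine setLIntegral_mono' measurableSet_Ioc fun x hx => ?_
  have hx1 : x ≤ 1 := hx.2.trans hε1
  rw [← ENNReal.ofReal_mul (Real.exp_pos _).le]
  exact ENNReal.ofReal_le_ofReal <|
    (mul_le_mul_of_nonneg_left (exp_neg_half_mul_rpow_le_chiDensity k hx.1.le hx1)
      (Real.exp_pos _).le).trans (exp_neg_mul_chiDensity_le_ncChiDensity k hθ ⟨hx.1, hx1⟩)

namespace InMixNcChiSq

variable {k : ℕ} {μ : Measure ℝ}

theorem exists_measure_Ioc_le (hk : 1 ≤ k) (hμ : InMixNcChiSq k μ) :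
    ∃ C, ∀ ε ∈ Ioc (0 : ℝ) 1, μ (Ioc 0 ε) ≤ ENNReal.ofReal (C * ε ^ ((k : ℝ) / 2)) := by
  obtain ⟨ν, hν, hν_neg, hμν⟩ := hμ
  obtain ⟨C, hC⟩ := exists_ncChiSq_Ioc_le hk
  have hθ : ∀ᵐ θ ∂ν, 0 ≤ θ := by simpa [ae_iff] using hν_neg
  refine ⟨C, fun ε hε => ?_⟩
  calc μ (Ioc 0 ε) = ∫⁻ θ, ncChiSq k θ (Ioc 0 ε) ∂ν := hμν _ measurableSet_Ioc
    _ ≤ ∫⁻ _, ENNReal.ofReal (C * ε ^ ((k : ℝ) / 2)) ∂ν :=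
        lintegral_mono_ae (hθ.mono fun θ hθ => hC θ hθ ε hε)
    _ = ENNReal.ofReal (C * ε ^ ((k : ℝ) / 2)) := by simp

theorem exists_le_measure_Ioc (hk : 1 ≤ k) (hμ : InMixNcChiSq k μ) :
    ∃ c > 0, ∀ ε ∈ Ioc (0 : ℝ) 1, ENNReal.ofReal (c * ε ^ ((k : ℝ) / 2)) ≤ μ (Ioc 0 ε) := by
  obtain ⟨ν, hν, hν_neg, hμν⟩ := hμ
  obtain ⟨c, hc, hc_le⟩ := exists_exp_neg_mul_le_ncChiSq_Ioc hk
  have hθ : ∀ᵐ θ ∂ν, 0 ≤ θ := by simpa [ae_iff] using hν_neg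
  set J := ∫⁻ θ, ENNReal.ofReal (Real.exp (-θ / 2)) ∂ν
  have hJ_pos : J ≠ 0 := by
    rw [Ne, lintegral_eq_zero_iff (by fun_prop)]
    intro h
    obtain ⟨θ, hθ⟩ := h.exists
    exact ENNReal.ofReal_pos.2 (Real.exp_pos _) |>.ne' hθ
  have hJ_le : J ≤ 1 :=
    calc J ≤ ∫⁻ _, 1 ∂ν := lintegral_mono_ae <| hθ.mono fun θ hθ =>
          ENNReal.ofReal_le_one.2 (Real.exp_le_one_iff.2 (by linarith))
      _ = 1 := by simp
  have hJ_ne_top : J ≠ ⊤ := ne_top_of_le_ne_top ENNReal.one_ne_top hJ_le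
  refine ⟨J.toReal * c, mul_pos (ENNReal.toReal_pos hJ_pos hJ_ne_top) hc, fun ε hε => ?_⟩
  calc ENNReal.ofReal (J.toReal * c * ε ^ ((k : ℝ) / 2))
      = ∫⁻ θ, ENNReal.ofReal (Real.exp (-θ / 2)) * ENNReal.ofReal (c * ε ^ ((k : ℝ) / 2)) ∂ν := by
        rw [lintegral_mul_const _ (by fun_prop), mul_assoc,
          ENNReal.ofReal_mul ENNReal.toReal_nonneg, ENNReal.ofReal_toReal hJ_ne_top]
    _ ≤ ∫⁻ θ, ncChiSq k θ (Ioc 0 ε) ∂ν := lintegral_mono_ae (hθ.mono fun θ hθ => hc_le θ hθ ε hε)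
    _ = μ (Ioc 0 ε) := (hμν _ measurableSet_Ioc).symm

theorem le_of_inMixNcChiSq {l : ℕ} (hk : 1 ≤ k) (hl : 1 ≤ l) (hμk : InMixNcChiSq k μ)
    (hμl : InMixNcChiSq l μ) : l ≤ k := by
  obtain ⟨c, hc, hlower⟩ := hμk.exists_le_measure_Ioc hk
  obtain ⟨C, hupper⟩ := hμl.exists_measure_Ioc_le hl
  have hcomp : ∀ᶠ ε in 𝓝[>] 0, c * ε ^ ((k : ℝ) / 2) ≤ C * ε ^ ((l : ℝ) / 2) := by
    filter_upwards [Ioc_mem_nhdsGT one_pos] with ε hε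
    have hpos : 0 < c * ε ^ ((k : ℝ) / 2) := mul_pos hc (Real.rpow_pos_of_pos hε.1 _)
    exact (ENNReal.ofReal_le_ofReal_iff'.1 ((hlower ε hε).trans (hupper ε hε))).resolve_right
      hpos.not_ge
  have hlk : (l : ℝ) / 2 ≤ k / 2 := le_of_eventually_mul_rpow_le_mul_rpow hc hcomp
  exact_mod_cast (div_le_div_iff_of_pos_right two_pos).1 hlk

end InMixNcChiSq

/-- If k and l have different parities, the mixture families of noncentral chi-squared
distributions with k and l degrees of freedom are disjoint. -/
theorem mix_ncChiSq_disjoint_of_opposite_parity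
    (k l : ℕ) (hk : 1 ≤ k) (hl : 1 ≤ l) (hpar : Odd (k + l)) :
    ¬ ∃ μ : Measure ℝ, InMixNcChiSq k μ ∧ InMixNcChiSq l μ := by
  rintro ⟨μ, hμk, hμl⟩
  obtain rfl : k = l :=
    le_antisymm (hμl.le_of_inMixNcChiSq hl hk hμk) (hμk.le_of_inMixNcChiSq hk hl hμl)
  exact Nat.not_odd_iff_even.2 ⟨k, rfl⟩ hpar
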